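/- arXiv:0906.2903 — 2 statements merged into one kernel-verified Lean document; each statement's English description precedes it below -/
import Mathlib

section
/- For the first-order jet rheonomic dynamical system with F^{(i)}_{(1)1} = −∂X^{(i)}_{(1)}/∂t − (∂X^{(i)}_{(1)}/∂x^m) x₁^m, where X^{(i)}_{(1)} depends only on (t,x), the jet h-deviation curvature tensor equals P^i_{j11} = (1/2)∂²X^{(i)}/∂t∂x^j + (1/2)(∂²X^{(i)}/∂x^j∂x^r)x₁^r + (1/4)(∂X^{(i)}/∂x^r)(∂X^{(r)}/∂x^j) + (1/2)(dH¹₁₁/dt)δ^i_j − (1/4)(H¹₁₁)²δ^i_j. -/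
noncomputable section

/-- Partial derivative of `f` with respect to the `j`-th coordinate at `x`. -/
def pd {n : ℕ} (f : (Fin n → ℝ) → ℝ) (x : Fin n → ℝ) (j : Fin n) : ℝ :=
  deriv (fun s => f (Function.update x j s)) (x j)

/-- The first h-KCC-invariant
`ε^{(i)}_{(1)1} = −F^{(i)} + (1/2)(∂F^{(i)}/∂x₁^r) x₁^r − (1/2) H¹₁₁ x₁^i`. -/
def eps {n : ℕ} (F : ℝ → (Fin n → ℝ) → (Fin n → ℝ) → Fin n → ℝ) (H : ℝ → ℝ)
    (t : ℝ) (x v : Fin n → ℝ) (i : Fin n) : ℝ :=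
  -F t x v i + (1 / 2) * ∑ r, pd (fun w => F t x w i) v r * v r
    - (1 / 2) * H t * v i

/-- The second h-KCC-invariant (jet h-deviation curvature tensor) `P^i_{j11}`. -/
def Pdev {n : ℕ} (F : ℝ → (Fin n → ℝ) → (Fin n → ℝ) → Fin n → ℝ) (H : ℝ → ℝ)
    (t : ℝ) (x v : Fin n → ℝ) (i j : Fin n) : ℝ :=
  -pd (fun y => F t y v i) x j
    + (1 / 2) * deriv (fun s => pd (fun w => F s x w i) v j) t
    + (1 / 2) * ∑ r, pd (fun y => pd (fun w => F t y w i) v j) x r * v r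
    - (1 / 2) * ∑ r, pd (fun w => pd (fun w' => F t x w' i) w j) v r * F t x v r
    + (1 / 4) * ∑ r, pd (fun w => F t x w i) v r * pd (fun w => F t x w r) v j
    + (1 / 2) * deriv H t * (if i = j then (1 : ℝ) else 0)
    - (1 / 4) * (H t) ^ 2 * (if i = j then (1 : ℝ) else 0)

/-- The third h-KCC-invariant
`R^i_{jk1} = (1/3)[∂P^i_{j11}/∂x₁^k − ∂P^i_{k11}/∂x₁^j]`. -/
def Rcurv {n : ℕ} (F : ℝ → (Fin n → ℝ) → (Fin n → ℝ) → Fin n → ℝ) (H : ℝ → ℝ)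
    (t : ℝ) (x v : Fin n → ℝ) (i j k : Fin n) : ℝ :=
  (1 / 3) * (pd (fun w => Pdev F H t x w i j) v k
    - pd (fun w => Pdev F H t x w i k) v j)

/-- The fourth h-KCC-invariant `B^i_{jkm} = ∂R^i_{jk1}/∂x₁^m`. -/
def Bcurv {n : ℕ} (F : ℝ → (Fin n → ℝ) → (Fin n → ℝ) → Fin n → ℝ) (H : ℝ → ℝ)
    (t : ℝ) (x v : Fin n → ℝ) (i j k m : Fin n) : ℝ :=
  pd (fun w => Rcurv F H t x w i j k) v m

/-- The fifth h-KCC-invariant `D^{i1}_{jkm} = ∂³F^{(i)}/∂x₁^j∂x₁^k∂x₁^m`. -/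
def Dtens {n : ℕ} (F : ℝ → (Fin n → ℝ) → (Fin n → ℝ) → Fin n → ℝ)
    (t : ℝ) (x v : Fin n → ℝ) (i j k m : Fin n) : ℝ :=
  pd (fun w => pd (fun w' => pd (fun w'' => F t x w'' i) w' j) w k) v m

/-- The curvature tensor of a (time-independent) symmetric linear connection:
`𝔯^i_{pqj} = ∂Γ^i_{pq}/∂x^j − ∂Γ^i_{pj}/∂x^q + Γ^r_{pq}Γ^i_{rj} − Γ^r_{pj}Γ^i_{rq}`. -/
def curv {n : ℕ} (Γ : (Fin n → ℝ) → Fin n → Fin n → Fin n → ℝ)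
    (x : Fin n → ℝ) (i p q j : Fin n) : ℝ :=
  pd (fun y => Γ y i p q) x j - pd (fun y => Γ y i p j) x q
    + ∑ r, Γ x r p q * Γ x i r j - ∑ r, Γ x r p j * Γ x i r q

/-- Smoothness of a local object on the 1-jet space. -/
def SmoothJet {n : ℕ} (G : ℝ → (Fin n → ℝ) → (Fin n → ℝ) → Fin n → ℝ) : Prop :=
  ContDiff ℝ (⊤ : ℕ∞) (fun p : ℝ × (Fin n → ℝ) × (Fin n → ℝ) => G p.1 p.2.1 p.2.2)

section helpers
variable {n : ℕ}

theorem myupdate (x : Fin n → ℝ) (j : Fin n) (s : ℝ) :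
    Function.update x j s = x + (s - x j) • (Pi.single j 1 : Fin n → ℝ) := by
  funext m
  rcases eq_or_ne m j with h | h
  · subst h
    simp only [Function.update_self, Pi.add_apply, Pi.smul_apply, Pi.single_eq_same,
      smul_eq_mul, mul_one]
    ring
  · simp [Function.update_of_ne h, Pi.single_eq_of_ne h]

theorem pd_eq_fderiv {f : (Fin n → ℝ) → ℝ} {x : Fin n → ℝ}
    (hf : DifferentiableAt ℝ f x) (j : Fin n) :
    pd f x j = fderiv ℝ f x (Pi.single j 1) := by
  have hline : HasDerivAt (fun s : ℝ => x + (s - x j) • (Pi.single j 1 : Fin n → ℝ))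
      (Pi.single j 1) (x j) := by
    have h1 : HasDerivAt (fun s : ℝ => s - x j) 1 (x j) := (hasDerivAt_id _).sub_const _
    simpa using (h1.smul_const (Pi.single j 1 : Fin n → ℝ)).const_add x
  have hx' : x + ((x j) - x j) • (Pi.single j 1 : Fin n → ℝ) = x := by simp
  have hcomp : HasDerivAt (fun s : ℝ => f (x + (s - x j) • (Pi.single j 1 : Fin n → ℝ)))
      (fderiv ℝ f x (Pi.single j 1)) (x j) := by
    have hfd : HasFDerivAt f (fderiv ℝ f x)
        (x + ((x j) - x j) • (Pi.single j 1 : Fin n → ℝ)) := by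
      rw [hx']; exact hf.hasFDerivAt
    exact hfd.comp_hasDerivAt _ hline
  have heq : (fun s : ℝ => f (Function.update x j s))
      = fun s => f (x + (s - x j) • (Pi.single j 1 : Fin n → ℝ)) := by
    funext s; rw [myupdate]
  rw [pd, heq]
  exact hcomp.deriv

theorem slice_x {h : ℝ × (Fin n → ℝ) → ℝ} (hh : ContDiff ℝ (⊤ : ℕ∞) h) (t : ℝ)
    (x : Fin n → ℝ) (j : Fin n) :
    pd (fun y => h (t, y)) x j = fderiv ℝ h (t, x) (0, Pi.single j 1) := by
  have hin : HasFDerivAt (fun y : Fin n → ℝ => ((t, y) : ℝ × (Fin n → ℝ)))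
      ((0 : (Fin n → ℝ) →L[ℝ] ℝ).prod (ContinuousLinearMap.id ℝ (Fin n → ℝ))) x :=
    (hasFDerivAt_const t x).prodMk (hasFDerivAt_id x)
  have hcomp : HasFDerivAt (fun y => h (t, y))
      ((fderiv ℝ h (t, x)).comp
        ((0 : (Fin n → ℝ) →L[ℝ] ℝ).prod (ContinuousLinearMap.id ℝ (Fin n → ℝ)))) x :=
    ((hh.differentiable (by simp) (t, x)).hasFDerivAt).comp x hin
  rw [pd_eq_fderiv hcomp.differentiableAt j, hcomp.fderiv]
  simp

theorem slice_t {h : ℝ × (Fin n → ℝ) → ℝ} (hh : ContDiff ℝ (⊤ : ℕ∞) h) (t : ℝ) (x : Fin n → ℝ) :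
    deriv (fun s => h (s, x)) t = fderiv ℝ h (t, x) (1, 0) := by
  have hin : HasDerivAt (fun s : ℝ => ((s, x) : ℝ × (Fin n → ℝ))) (1, 0) t :=
    (hasDerivAt_id t).prodMk (hasDerivAt_const t x)
  exact (((hh.differentiable (by simp) (t, x)).hasFDerivAt).comp_hasDerivAt t hin).deriv

theorem contDiff_fderiv_apply {G : ℝ × (Fin n → ℝ) → ℝ} (hG : ContDiff ℝ (⊤ : ℕ∞) G)
    (u : ℝ × (Fin n → ℝ)) : ContDiff ℝ (⊤ : ℕ∞) (fun p => fderiv ℝ G p u) :=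
  (ContinuousLinearMap.apply ℝ ℝ u).contDiff.comp (hG.fderiv_right (by simp))

theorem fderiv_fderiv_apply {G : ℝ × (Fin n → ℝ) → ℝ} (hG : ContDiff ℝ (⊤ : ℕ∞) G)
    (q u v : ℝ × (Fin n → ℝ)) :
    fderiv ℝ (fun p => fderiv ℝ G p u) q v = fderiv ℝ (fderiv ℝ G) q v u := by
  have hd : HasFDerivAt (fderiv ℝ G) (fderiv ℝ (fderiv ℝ G) q) q :=
    ((hG.fderiv_right (m := (⊤ : ℕ∞)) (by simp)).differentiable (by simp) q).hasFDerivAt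
  have h2 : HasFDerivAt (fun p => fderiv ℝ G p u)
      ((ContinuousLinearMap.apply ℝ ℝ u).comp (fderiv ℝ (fderiv ℝ G) q)) q :=
    (ContinuousLinearMap.apply ℝ ℝ u).hasFDerivAt.comp q hd
  rw [h2.fderiv]
  simp

theorem symm2 {G : ℝ × (Fin n → ℝ) → ℝ} (hG : ContDiff ℝ (⊤ : ℕ∞) G)
    (q u v : ℝ × (Fin n → ℝ)) :
    fderiv ℝ (fderiv ℝ G) q u v = fderiv ℝ (fderiv ℝ G) q v u :=
  second_derivative_symmetric (fun y => (hG.differentiable (by simp) y).hasFDerivAt)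
    (((hG.fderiv_right (m := (⊤ : ℕ∞)) (by simp)).differentiable (by simp) q).hasFDerivAt) u v

theorem clm_decomp {F : Type*} [NormedAddCommGroup F] [NormedSpace ℝ F]
    (T : (ℝ × (Fin n → ℝ)) →L[ℝ] F) (a : ℝ) (w : Fin n → ℝ) :
    T (a, w) = a • T (1, 0) + ∑ r, w r • T (0, (Pi.single r 1 : Fin n → ℝ)) := by
  have key : ((a, w) : ℝ × (Fin n → ℝ))
      = a • ((1:ℝ), (0 : Fin n → ℝ)) + ∑ r, w r • ((0:ℝ), (Pi.single r 1 : Fin n → ℝ)) := by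
    refine Prod.ext ?_ ?_
    · simp [Prod.fst_sum]
    · simp only [Prod.snd_add, Prod.snd_sum, Prod.smul_snd, Prod.smul_fst, smul_zero]
      funext m
      simp [Finset.sum_apply, Pi.single_apply]
  rw [key, map_add, map_smul, map_sum]
  congr 1
  exact Finset.sum_congr rfl fun r _ => map_smul T _ _

theorem pd_neg_clm_slice (L : (ℝ × (Fin n → ℝ)) →L[ℝ] ℝ) (v : Fin n → ℝ) (j : Fin n) :
    pd (fun w => -(L (1, w))) v j = -(L (0, Pi.single j 1)) := by
  have h := slice_x (h := fun p => -(L p)) (L.contDiff.neg) 1 v j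
  rw [h, fderiv_fun_neg]
  simp

end helpers

/-- auxiliary: the components of the field as functions on `ℝ × (Fin n → ℝ)`. -/
def Gfun {n : ℕ} (X : ℝ → (Fin n → ℝ) → Fin n → ℝ) (i : Fin n) :
    ℝ × (Fin n → ℝ) → ℝ := fun p => X p.1 p.2 i


set_option maxHeartbeats 2000000 in
/-- The jet h-deviation curvature tensor of the SODE induced by a first order jet
rheonomic dynamical system `dx^i/dt = X^{(i)}_{(1)}(t,x)`. -/
theorem deviation_curvature_of_rheonomic_system {n : ℕ}
    (X : ℝ → (Fin n → ℝ) → Fin n → ℝ) (H : ℝ → ℝ)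
    (hX : ContDiff ℝ (⊤ : ℕ∞) (fun p : ℝ × (Fin n → ℝ) => X p.1 p.2))
    (hH : ContDiff ℝ (⊤ : ℕ∞) H) :
    ∀ (t : ℝ) (x v : Fin n → ℝ) (i j : Fin n),
      Pdev (fun s y w i' => -(deriv (fun u => X u y i') s)
            - ∑ m, pd (fun y' => X s y' i') y m * w m) H t x v i j =
        (1 / 2) * deriv (fun s => pd (fun y => X s y i) x j) t
          + (1 / 2) * ∑ r, pd (fun y => pd (fun y' => X t y' i) y j) x r * v r
          + (1 / 4) * ∑ r, pd (fun y => X t y i) x r * pd (fun y => X t y r) x j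
          + (1 / 2) * deriv H t * (if i = j then (1 : ℝ) else 0)
          - (1 / 4) * (H t) ^ 2 * (if i = j then (1 : ℝ) else 0) := by
  intro t x v i j
  have hG : ∀ i' : Fin n, ContDiff ℝ (⊤ : ℕ∞) (Gfun X i') := fun i' => contDiff_pi.mp hX i'
  -- the SODE coefficients as minus a linear form in the velocity
  have hF : ∀ (s : ℝ) (y w : Fin n → ℝ) (i' : Fin n),
      -(deriv (fun u => X u y i') s) - ∑ m, pd (fun y' => X s y' i') y m * w m
        = -(fderiv ℝ (Gfun X i') (s, y) (1, w)) := by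
    intro s y w i'
    have h1 : deriv (fun u => X u y i') s = fderiv ℝ (Gfun X i') (s, y) (1, 0) :=
      slice_t (hG i') s y
    have h2 : ∀ m : Fin n, pd (fun y' => X s y' i') y m
        = fderiv ℝ (Gfun X i') (s, y) (0, (Pi.single m 1 : Fin n → ℝ)) :=
      fun m => slice_x (hG i') s y m
    rw [h1]
    simp only [h2]
    rw [clm_decomp (fderiv ℝ (Gfun X i') (s, y)) 1 w]
    have h3 : ∑ m, fderiv ℝ (Gfun X i') (s, y) (0, (Pi.single m 1 : Fin n → ℝ)) * w m
        = ∑ m, w m • fderiv ℝ (Gfun X i') (s, y) (0, (Pi.single m 1 : Fin n → ℝ)) :=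
      Finset.sum_congr rfl fun m _ => by rw [smul_eq_mul, mul_comm]
    rw [h3, one_smul]
    ring
  -- partial derivative in the velocity variable
  have pdw : ∀ (s : ℝ) (y w : Fin n → ℝ) (i' j' : Fin n),
      pd (fun w' => -(deriv (fun u => X u y i') s)
          - ∑ m, pd (fun y' => X s y' i') y m * w' m) w j'
        = -(fderiv ℝ (Gfun X i') (s, y) (0, (Pi.single j' 1 : Fin n → ℝ))) := by
    intro s y w i' j'
    have e : (fun w' => -(deriv (fun u => X u y i') s)
        - ∑ m, pd (fun y' => X s y' i') y m * w' m)
        = fun w' => -(fderiv ℝ (Gfun X i') (s, y) (1, w')) := funext fun w' => hF s y w' i'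
    rw [e]
    exact pd_neg_clm_slice _ w j'
  -- Term 1 of Pdev
  have T1 : pd (fun y => -(deriv (fun u => X u y i) t)
        - ∑ m, pd (fun y' => X t y' i) y m * v m) x j
      = -(fderiv ℝ (fderiv ℝ (Gfun X i)) (t, x) (0, (Pi.single j 1 : Fin n → ℝ)) (1, v)) := by
    have e : (fun y => -(deriv (fun u => X u y i) t)
        - ∑ m, pd (fun y' => X t y' i) y m * v m)
        = fun y => -(fderiv ℝ (Gfun X i) (t, y) (1, v)) := funext fun y => hF t y v i
    rw [e]
    have hs : pd (fun y => -(fderiv ℝ (Gfun X i) (t, y) (1, v))) x j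
        = fderiv ℝ (fun p => -(fderiv ℝ (Gfun X i) p (1, v))) (t, x)
            (0, (Pi.single j 1 : Fin n → ℝ)) :=
      slice_x ((contDiff_fderiv_apply (hG i) (1, v)).neg) t x j
    rw [hs, fderiv_fun_neg, ContinuousLinearMap.neg_apply, fderiv_fderiv_apply (hG i)]
  -- Term 2 of Pdev
  have T2 : deriv (fun s => pd (fun w => -(deriv (fun u => X u x i) s)
        - ∑ m, pd (fun y' => X s y' i) x m * w m) v j) t
      = -(fderiv ℝ (fderiv ℝ (Gfun X i)) (t, x) (1, 0) (0, (Pi.single j 1 : Fin n → ℝ))) := by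
    have e : (fun s => pd (fun w => -(deriv (fun u => X u x i) s)
        - ∑ m, pd (fun y' => X s y' i) x m * w m) v j)
        = fun s => -(fderiv ℝ (Gfun X i) (s, x) (0, (Pi.single j 1 : Fin n → ℝ))) :=
      funext fun s => pdw s x v i j
    rw [e]
    have hs : deriv (fun s => -(fderiv ℝ (Gfun X i) (s, x)
          (0, (Pi.single j 1 : Fin n → ℝ)))) t
        = fderiv ℝ (fun p => -(fderiv ℝ (Gfun X i) p (0, (Pi.single j 1 : Fin n → ℝ))))
            (t, x) (1, 0) :=
      slice_t ((contDiff_fderiv_apply (hG i) (0, (Pi.single j 1 : Fin n → ℝ))).neg) t x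
    rw [hs, fderiv_fun_neg, ContinuousLinearMap.neg_apply, fderiv_fderiv_apply (hG i)]
  -- Term 3 of Pdev
  have T3 : ∀ r : Fin n, pd (fun y => pd (fun w => -(deriv (fun u => X u y i) t)
        - ∑ m, pd (fun y' => X t y' i) y m * w m) v j) x r
      = -(fderiv ℝ (fderiv ℝ (Gfun X i)) (t, x) (0, (Pi.single r 1 : Fin n → ℝ))
          (0, (Pi.single j 1 : Fin n → ℝ))) := by
    intro r
    have e : (fun y => pd (fun w => -(deriv (fun u => X u y i) t)
        - ∑ m, pd (fun y' => X t y' i) y m * w m) v j)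
        = fun y => -(fderiv ℝ (Gfun X i) (t, y) (0, (Pi.single j 1 : Fin n → ℝ))) :=
      funext fun y => pdw t y v i j
    rw [e]
    have hs : pd (fun y => -(fderiv ℝ (Gfun X i) (t, y)
          (0, (Pi.single j 1 : Fin n → ℝ)))) x r
        = fderiv ℝ (fun p => -(fderiv ℝ (Gfun X i) p (0, (Pi.single j 1 : Fin n → ℝ))))
            (t, x) (0, (Pi.single r 1 : Fin n → ℝ)) :=
      slice_x ((contDiff_fderiv_apply (hG i) (0, (Pi.single j 1 : Fin n → ℝ))).neg) t x r
    rw [hs, fderiv_fun_neg, ContinuousLinearMap.neg_apply, fderiv_fderiv_apply (hG i)]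
  -- Term 4 of Pdev vanishes
  have T4 : ∀ r : Fin n, pd (fun w => pd (fun w' => -(deriv (fun u => X u x i) t)
        - ∑ m, pd (fun y' => X t y' i) x m * w' m) w j) v r = 0 := by
    intro r
    have e : (fun w => pd (fun w' => -(deriv (fun u => X u x i) t)
        - ∑ m, pd (fun y' => X t y' i) x m * w' m) w j)
        = fun _ => -(fderiv ℝ (Gfun X i) (t, x) (0, (Pi.single j 1 : Fin n → ℝ))) :=
      funext fun w => pdw t x w i j
    rw [e]
    simp [pd]
  -- first partials in x
  have Rx : ∀ (s : ℝ) (y : Fin n → ℝ) (i' m : Fin n),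
      pd (fun y' => X s y' i') y m
        = fderiv ℝ (Gfun X i') (s, y) (0, (Pi.single m 1 : Fin n → ℝ)) :=
    fun s y i' m => slice_x (hG i') s y m
  -- RHS term 1
  have R1 : deriv (fun s => pd (fun y => X s y i) x j) t
      = fderiv ℝ (fderiv ℝ (Gfun X i)) (t, x) (1, 0) (0, (Pi.single j 1 : Fin n → ℝ)) := by
    have e : (fun s => pd (fun y => X s y i) x j)
        = fun s => fderiv ℝ (Gfun X i) (s, x) (0, (Pi.single j 1 : Fin n → ℝ)) :=
      funext fun s => Rx s x i j
    rw [e]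
    have hs : deriv (fun s => fderiv ℝ (Gfun X i) (s, x)
          (0, (Pi.single j 1 : Fin n → ℝ))) t
        = fderiv ℝ (fun p => fderiv ℝ (Gfun X i) p (0, (Pi.single j 1 : Fin n → ℝ)))
            (t, x) (1, 0) :=
      slice_t (contDiff_fderiv_apply (hG i) (0, (Pi.single j 1 : Fin n → ℝ))) t x
    rw [hs, fderiv_fderiv_apply (hG i)]
  -- RHS term 2
  have R2 : ∀ r : Fin n, pd (fun y => pd (fun y' => X t y' i) y j) x r
      = fderiv ℝ (fderiv ℝ (Gfun X i)) (t, x) (0, (Pi.single r 1 : Fin n → ℝ))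
          (0, (Pi.single j 1 : Fin n → ℝ)) := by
    intro r
    have e : (fun y => pd (fun y' => X t y' i) y j)
        = fun y => fderiv ℝ (Gfun X i) (t, y) (0, (Pi.single j 1 : Fin n → ℝ)) :=
      funext fun y => Rx t y i j
    rw [e]
    have hs : pd (fun y => fderiv ℝ (Gfun X i) (t, y)
          (0, (Pi.single j 1 : Fin n → ℝ))) x r
        = fderiv ℝ (fun p => fderiv ℝ (Gfun X i) p (0, (Pi.single j 1 : Fin n → ℝ)))
            (t, x) (0, (Pi.single r 1 : Fin n → ℝ)) :=
      slice_x (contDiff_fderiv_apply (hG i) (0, (Pi.single j 1 : Fin n → ℝ))) t x r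
    rw [hs, fderiv_fderiv_apply (hG i)]
  -- symmetry + decomposition of the second derivative
  have hsym : fderiv ℝ (fderiv ℝ (Gfun X i)) (t, x) (0, (Pi.single j 1 : Fin n → ℝ)) (1, v)
      = fderiv ℝ (fderiv ℝ (Gfun X i)) (t, x) (1, 0) (0, (Pi.single j 1 : Fin n → ℝ))
        + ∑ r, v r * fderiv ℝ (fderiv ℝ (Gfun X i)) (t, x)
            (0, (Pi.single r 1 : Fin n → ℝ)) (0, (Pi.single j 1 : Fin n → ℝ)) := by
    rw [symm2 (hG i) (t, x) (0, (Pi.single j 1 : Fin n → ℝ)) (1, v)]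
    have hd := congrArg (fun L : (ℝ × (Fin n → ℝ)) →L[ℝ] ℝ =>
        L (0, (Pi.single j 1 : Fin n → ℝ)))
      (clm_decomp (fderiv ℝ (fderiv ℝ (Gfun X i)) (t, x)) 1 v)
    simpa [ContinuousLinearMap.add_apply, ContinuousLinearMap.coe_sum',
      Finset.sum_apply, ContinuousLinearMap.smul_apply, smul_eq_mul] using hd
  simp only [Pdev]
  rw [T1, T2, R1]
  simp only [T3, T4]
  simp only [R2]
  simp only [pdw]
  simp only [Rx]
  rw [hsym]
  simp only [neg_mul_neg, neg_mul, mul_neg, neg_neg, zero_mul, mul_zero, Finset.sum_const_zero,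
    Finset.sum_neg_distrib]
  have hc : ∑ r, v r * fderiv ℝ (fderiv ℝ (Gfun X i)) (t, x)
        (0, (Pi.single r 1 : Fin n → ℝ)) (0, (Pi.single j 1 : Fin n → ℝ))
      = ∑ r, fderiv ℝ (fderiv ℝ (Gfun X i)) (t, x)
        (0, (Pi.single r 1 : Fin n → ℝ)) (0, (Pi.single j 1 : Fin n → ℝ)) * v r :=
    Finset.sum_congr rfl fun r _ => mul_comm _ _
  rw [hc]
  ring
end
end

section
/- Suppose F^{(i)}_{(1)1} = Γ^i_{pq}(x)x₁^p x₁^q − H¹₁₁(t)x₁^i where Γ^i_{pq}(x) is a flat symmetric connection (symmetric in p,q with vanishing curvature 𝔯^i_{pqj} = ∂Γ^i_{pq}/∂x^j − ∂Γ^i_{pj}/∂x^q + Γ^r_{pq}Γ^i_{rj} − Γ^r_{pj}Γ^i_{rq} = 0). Then all five h-KCC-invariants of the SODE vanish: ε^{(i)}_{(1)1} = 0, P^i_{j11} = 0, R^i_{jk1} = 0, B^i_{jkm} = 0 and D^{i1}_{jkm} = 0. -/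
noncomputable section

section Aux

lemma myHasDerivAt_update {n : ℕ} (v : Fin n → ℝ) (j p : Fin n) (s : ℝ) :
    HasDerivAt (fun s => Function.update v j s p) (if p = j then 1 else 0) s := by
  rcases eq_or_ne p j with h | h
  · subst h
    simpa [Function.update_self] using (hasDerivAt_id' s)
  · simp only [Function.update_of_ne h, if_neg h]
    exact hasDerivAt_const s (v p)

lemma pd_const {n : ℕ} (c : ℝ) (v : Fin n → ℝ) (m : Fin n) :
    pd (fun _ => c) v m = 0 := by
  simp [pd]

lemma pd_lin {n : ℕ} (c : Fin n → ℝ) (a b : ℝ) (v : Fin n → ℝ) (r : Fin n) :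
    pd (fun w => a * (∑ q, c q * w q) - b) v r = a * c r := by
  have h : HasDerivAt (fun s => a * (∑ q, c q * Function.update v r s q) - b)
      (a * (∑ q, c q * (if q = r then 1 else 0))) (v r) := by
    have hs : HasDerivAt (fun s => ∑ q, c q * Function.update v r s q)
        (∑ q, c q * (if q = r then 1 else 0)) (v r) := by
      apply HasDerivAt.fun_sum
      intro q _
      exact (myHasDerivAt_update v r q (v r)).const_mul (c q)
    exact (hs.const_mul a).sub_const b
  rw [pd, h.deriv]
  simp [mul_ite, Finset.sum_ite_eq']

lemma pd_quad {n : ℕ} (C : Fin n → Fin n → ℝ) (hC : ∀ p q, C p q = C q p) (b : ℝ)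
    (v : Fin n → ℝ) (i j : Fin n) :
    pd (fun w => (∑ p, ∑ q, C p q * w p * w q) - b * w i) v j
      = 2 * (∑ q, C j q * v q) - b * (if i = j then 1 else 0) := by
  have upd_self : ∀ q, Function.update v j (v j) q = v q := by
    intro q; rw [Function.update_eq_self]
  have h : HasDerivAt (fun s =>
      (∑ p, ∑ q, C p q * Function.update v j s p * Function.update v j s q)
        - b * Function.update v j s i)
      ((∑ p, ∑ q, (C p q * (if p = j then 1 else 0) * Function.update v j (v j) q
          + C p q * Function.update v j (v j) p * (if q = j then 1 else 0)))
        - b * (if i = j then 1 else 0)) (v j) := by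
    apply HasDerivAt.sub
    · apply HasDerivAt.fun_sum
      intro p _
      apply HasDerivAt.fun_sum
      intro q _
      exact ((myHasDerivAt_update v j p (v j)).const_mul (C p q)).mul
        (myHasDerivAt_update v j q (v j))
    · exact (myHasDerivAt_update v j i (v j)).const_mul b
  rw [pd, h.deriv]
  have e0 : ∀ p q : Fin n, C p q * (if p = j then (1:ℝ) else 0) * Function.update v j (v j) q
      + C p q * Function.update v j (v j) p * (if q = j then (1:ℝ) else 0)
      = (if p = j then C p q * v q else 0) + (if q = j then C p q * v p else 0) := by
    intro p q
    rw [upd_self, upd_self]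
    split_ifs <;> ring
  simp only [e0, Finset.sum_add_distrib]
  have e1 : ∑ p, ∑ q, (if p = j then C p q * v q else 0) = ∑ q, C j q * v q := by
    rw [Finset.sum_comm]
    simp [Finset.sum_ite_eq']
  have e2 : ∑ p, ∑ q, (if q = j then C p q * v p else 0) = ∑ p, C p j * v p := by
    simp [Finset.sum_ite_eq']
  rw [e1, e2]
  have e3 : ∑ p, C p j * v p = ∑ q, C j q * v q := by
    apply Finset.sum_congr rfl
    intro p _
    rw [hC]
  rw [e3]; ring

lemma diff_update_path {n : ℕ} (x : Fin n → ℝ) (r : Fin n) :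
    Differentiable ℝ (fun s : ℝ => Function.update x r s) := by
  rw [differentiable_pi]
  intro p
  rcases eq_or_ne p r with h | h
  · subst h
    simpa [Function.update_self] using differentiable_id (𝕜 := ℝ) (E := ℝ)
  · simp only [Function.update_of_ne h]
    exact differentiable_const _

lemma diffAt_comp_update {n : ℕ} (g : (Fin n → ℝ) → ℝ) (hg : ContDiff ℝ (⊤ : ℕ∞) g)
    (x : Fin n → ℝ) (r : Fin n) (s : ℝ) :
    DifferentiableAt ℝ (fun s => g (Function.update x r s)) s :=
  ((hg.differentiable (by simp)).comp (diff_update_path x r)).differentiableAt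

lemma pd_x_quad {n : ℕ} (G : (Fin n → ℝ) → Fin n → Fin n → ℝ)
    (hG : ∀ p q, ContDiff ℝ (⊤ : ℕ∞) (fun y => G y p q)) (c : ℝ) (x v : Fin n → ℝ) (r : Fin n) :
    pd (fun y => (∑ p, ∑ q, G y p q * v p * v q) - c) x r
      = ∑ p, ∑ q, pd (fun y => G y p q) x r * v p * v q := by
  rw [pd, deriv_sub_const, deriv_fun_sum]
  · apply Finset.sum_congr rfl
    intro p _
    rw [deriv_fun_sum]
    · apply Finset.sum_congr rfl
      intro q _
      rw [deriv_mul_const, deriv_mul_const (diffAt_comp_update _ (hG p q) x r _)]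
      · rfl
      · exact (diffAt_comp_update _ (hG p q) x r _).mul_const _
    · intro q _
      exact ((diffAt_comp_update _ (hG p q) x r _).mul_const _).mul_const _
  · intro p _
    apply DifferentiableAt.fun_sum
    intro q _
    exact ((diffAt_comp_update _ (hG p q) x r _).mul_const _).mul_const _

lemma pd_x_lin {n : ℕ} (G : (Fin n → ℝ) → Fin n → ℝ)
    (hG : ∀ q, ContDiff ℝ (⊤ : ℕ∞) (fun y => G y q)) (c : ℝ) (x v : Fin n → ℝ) (r : Fin n) :
    pd (fun y => 2 * (∑ q, G y q * v q) - c) x r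
      = 2 * ∑ q, pd (fun y => G y q) x r * v q := by
  rw [pd, deriv_sub_const, deriv_const_mul, deriv_fun_sum]
  · congr 1
    apply Finset.sum_congr rfl
    intro q _
    rw [deriv_mul_const (diffAt_comp_update _ (hG q) x r _)]
    rfl
  · intro q _
    exact (diffAt_comp_update _ (hG q) x r _).mul_const _
  · apply DifferentiableAt.fun_sum
    intro q _
    exact (diffAt_comp_update _ (hG q) x r _).mul_const _

lemma double_sum_antisym {n : ℕ} (T : Fin n → Fin n → ℝ) (v : Fin n → ℝ)
    (h : ∀ p q, T p q + T q p = 0) : ∑ p, ∑ q, T p q * (v p * v q) = 0 := by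
  have hswap : ∑ p, ∑ q, T p q * (v p * v q) = ∑ p, ∑ q, T q p * (v p * v q) := by
    rw [Finset.sum_comm]
    exact Finset.sum_congr rfl fun p _ => Finset.sum_congr rfl fun q _ => by ring
  have h2 : (∑ p, ∑ q, T p q * (v p * v q)) + (∑ p, ∑ q, T q p * (v p * v q))
      = ∑ p, ∑ q, (T p q + T q p) * (v p * v q) := by
    rw [← Finset.sum_add_distrib]
    apply Finset.sum_congr rfl; intro p _
    rw [← Finset.sum_add_distrib]
    apply Finset.sum_congr rfl; intro q _; ring
  simp only [h, zero_mul, Finset.sum_const_zero] at h2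
  linarith [hswap, h2]

end Aux

section Main

variable {n : ℕ}

lemma Pdev_zero
    (Γ : (Fin n → ℝ) → Fin n → Fin n → Fin n → ℝ) (H : ℝ → ℝ)
    (hΓ : ∀ i j k, ContDiff ℝ (⊤ : ℕ∞) (fun x => Γ x i j k))
    (hsym : ∀ x i j k, Γ x i j k = Γ x i k j)
    (hH : ContDiff ℝ (⊤ : ℕ∞) H)
    (hflat : ∀ x i p q j, curv Γ x i p q j = 0)
    (t : ℝ) (x v : Fin n → ℝ) (i j : Fin n) :
    Pdev (fun s y w i' => (∑ p, ∑ q, Γ y i' p q * w p * w q) - H s * w i') H t x v i j = 0 := by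
  have hpdF : ∀ (x v : Fin n → ℝ) (s : ℝ) (a b : Fin n),
      pd (fun w => (∑ p, ∑ q, Γ x a p q * w p * w q) - H s * w a) v b
        = 2 * (∑ q, Γ x a b q * v q) - H s * (if a = b then 1 else 0) :=
    fun x v s a b => pd_quad (fun p q => Γ x a p q) (fun p q => hsym x a p q) (H s) v a b
  simp only [Pdev, hpdF]
  have hpdx : pd (fun y => (∑ p, ∑ q, Γ y i p q * v p * v q) - H t * v i) x j
      = ∑ p, ∑ q, pd (fun y => Γ y i p q) x j * v p * v q :=
    pd_x_quad (fun y p q => Γ y i p q) (fun p q => hΓ i p q) _ x v j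
  have hpdx2 : ∀ r, pd (fun y => 2 * (∑ q, Γ y i j q * v q)
        - H t * (if i = j then (1:ℝ) else 0)) x r
      = 2 * ∑ q, pd (fun y => Γ y i j q) x r * v q :=
    fun r => pd_x_lin (fun y q => Γ y i j q) (fun q => hΓ i j q) _ x v r
  have hpdl : ∀ (w : Fin n → ℝ) (r : Fin n),
      pd (fun w => 2 * (∑ q, Γ x i j q * w q) - H t * (if i = j then (1:ℝ) else 0)) w r
        = 2 * Γ x i j r :=
    fun w r => pd_lin (fun q => Γ x i j q) 2 _ w r
  have hdt : deriv (fun s => 2 * (∑ q, Γ x i j q * v q)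
        - H s * (if i = j then (1:ℝ) else 0)) t
      = -(deriv H t * (if i = j then (1:ℝ) else 0)) := by
    rw [deriv_const_sub, deriv_mul_const (hH.differentiable (by simp)).differentiableAt]
  rw [hpdx, hdt]
  simp only [hpdx2, hpdl]
  -- normalize term 1
  have A1 : ∑ p, ∑ q, pd (fun y => Γ y i p q) x j * v p * v q
      = ∑ p, ∑ q, pd (fun y => Γ y i p q) x j * (v p * v q) := by
    apply Finset.sum_congr rfl; intro p _
    apply Finset.sum_congr rfl; intro q _
    ring
  -- term 3
  have A3 : ∑ r, (2 * ∑ q, pd (fun y => Γ y i j q) x r * v q) * v r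
      = 2 * ∑ p, ∑ q, pd (fun y => Γ y i j p) x q * (v p * v q) := by
    have step : ∀ r : Fin n, (2 * ∑ q, pd (fun y => Γ y i j q) x r * v q) * v r
        = ∑ q, 2 * (pd (fun y => Γ y i j q) x r * (v q * v r)) := by
      intro r
      rw [Finset.mul_sum, Finset.sum_mul]
      apply Finset.sum_congr rfl; intro q _; ring
    simp only [step]
    rw [Finset.sum_comm, Finset.mul_sum]
    apply Finset.sum_congr rfl; intro p _
    rw [Finset.mul_sum]
  -- term 4
  have A4 : ∑ r, 2 * Γ x i j r * ((∑ p, ∑ q, Γ x r p q * v p * v q) - H t * v r)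
      = 2 * (∑ p, ∑ q, (∑ r, Γ x i j r * Γ x r p q) * (v p * v q))
        - 2 * H t * (∑ q, Γ x i j q * v q) := by
    have step : ∀ r : Fin n, 2 * Γ x i j r * ((∑ p, ∑ q, Γ x r p q * v p * v q) - H t * v r)
        = (∑ p, ∑ q, 2 * (Γ x i j r * Γ x r p q * (v p * v q))) - 2 * H t * (Γ x i j r * v r) := by
      intro r
      rw [mul_sub]
      congr 1
      · rw [Finset.mul_sum]
        apply Finset.sum_congr rfl; intro p _
        rw [Finset.mul_sum]
        apply Finset.sum_congr rfl; intro q _; ring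
      · ring
    simp only [step, Finset.sum_sub_distrib]
    congr 1
    · rw [Finset.sum_comm, Finset.mul_sum]
      apply Finset.sum_congr rfl; intro p _
      rw [Finset.sum_comm, Finset.mul_sum]
      apply Finset.sum_congr rfl; intro q _
      rw [Finset.sum_mul, Finset.mul_sum]
      try (apply Finset.sum_congr rfl; intro r _; ring)
    · rw [Finset.mul_sum]
      try (apply Finset.sum_congr rfl; intro q _; ring)
  -- term 5
  have A5 : ∑ r, (2 * ∑ q, Γ x i r q * v q - H t * (if i = r then (1:ℝ) else 0)) *
        (2 * ∑ q, Γ x r j q * v q - H t * (if r = j then (1:ℝ) else 0))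
      = 4 * (∑ p, ∑ q, (∑ r, Γ x i r p * Γ x r j q) * (v p * v q))
        - 2 * H t * (∑ q, Γ x i j q * v q) - 2 * H t * (∑ q, Γ x i j q * v q)
        + H t ^ 2 * (if i = j then (1:ℝ) else 0) := by
    have step : ∀ r : Fin n, (2 * ∑ q, Γ x i r q * v q - H t * (if i = r then (1:ℝ) else 0)) *
        (2 * ∑ q, Γ x r j q * v q - H t * (if r = j then (1:ℝ) else 0))
        = (∑ p, ∑ q, 4 * (Γ x i r p * Γ x r j q * (v p * v q)))
          - 2 * H t * (if r = j then (∑ q, Γ x i r q * v q) else 0)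
          - 2 * H t * (if i = r then (∑ q, Γ x r j q * v q) else 0)
          + H t ^ 2 * (if i = r then (if r = j then (1:ℝ) else 0) else 0) := by
      intro r
      have expand : (∑ p, Γ x i r p * v p) * (∑ q, Γ x r j q * v q)
          = ∑ p, ∑ q, Γ x i r p * Γ x r j q * (v p * v q) := by
        rw [Finset.sum_mul_sum]
        apply Finset.sum_congr rfl; intro p _
        apply Finset.sum_congr rfl; intro q _; ring
      have expand4 : ∑ p, ∑ q, 4 * (Γ x i r p * Γ x r j q * (v p * v q))
          = 4 * ((∑ p, Γ x i r p * v p) * (∑ q, Γ x r j q * v q)) := by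
        rw [expand, Finset.mul_sum]
        apply Finset.sum_congr rfl; intro p _
        rw [Finset.mul_sum]
      rw [expand4]
      split_ifs <;> ring
    simp only [step, Finset.sum_sub_distrib, Finset.sum_add_distrib]
    have c1 : ∑ r, ∑ p, ∑ q, 4 * (Γ x i r p * Γ x r j q * (v p * v q))
        = 4 * (∑ p, ∑ q, (∑ r, Γ x i r p * Γ x r j q) * (v p * v q)) := by
      rw [Finset.sum_comm, Finset.mul_sum]
      apply Finset.sum_congr rfl; intro p _
      rw [Finset.sum_comm, Finset.mul_sum]
      apply Finset.sum_congr rfl; intro q _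
      rw [Finset.sum_mul, Finset.mul_sum]
      try (apply Finset.sum_congr rfl; intro r _; ring)
    have c2 : ∑ r, 2 * H t * (if r = j then (∑ q, Γ x i r q * v q) else 0)
        = 2 * H t * (∑ q, Γ x i j q * v q) := by
      rw [← Finset.mul_sum, Finset.sum_ite_eq' Finset.univ j (fun r => ∑ q, Γ x i r q * v q)]
      simp
    have c3 : ∑ r, 2 * H t * (if i = r then (∑ q, Γ x r j q * v q) else 0)
        = 2 * H t * (∑ q, Γ x i j q * v q) := by
      rw [← Finset.mul_sum, Finset.sum_ite_eq Finset.univ i (fun r => ∑ q, Γ x r j q * v q)]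
      simp
    have c4 : ∑ r, H t ^ 2 * (if i = r then (if r = j then (1:ℝ) else 0) else 0)
        = H t ^ 2 * (if i = j then (1:ℝ) else 0) := by
      rw [← Finset.mul_sum, Finset.sum_ite_eq Finset.univ i
        (fun r => if r = j then (1:ℝ) else 0)]
      simp
    rw [c1, c2, c3, c4]
  rw [A1, A3, A4, A5]
  -- the key curvature identity
  have key : ∀ p q : Fin n,
      ((-(pd (fun y => Γ y i p q) x j) + pd (fun y => Γ y i j p) x q
          - (∑ r, Γ x i j r * Γ x r p q) + ∑ r, Γ x i r p * Γ x r j q)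
        + (-(pd (fun y => Γ y i q p) x j) + pd (fun y => Γ y i j q) x p
          - (∑ r, Γ x i j r * Γ x r q p) + ∑ r, Γ x i r q * Γ x r j p)) = 0 := by
    intro p q
    have hD : ∀ (r a b : Fin n), pd (fun y => Γ y i a b) x r = pd (fun y => Γ y i b a) x r := by
      intro r a b
      rw [show (fun y => Γ y i a b) = (fun y => Γ y i b a) from
        funext fun y => hsym y i a b]
    have f1 := hflat x i p q j
    have f2 := hflat x i q p j
    simp only [curv] at f1 f2
    have s1 : ∑ r, Γ x r p q * Γ x i r j = ∑ r, Γ x i j r * Γ x r p q :=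
      Finset.sum_congr rfl fun r _ => by rw [hsym x i r j]; ring
    have s2 : ∑ r, Γ x r p j * Γ x i r q = ∑ r, Γ x i r q * Γ x r j p :=
      Finset.sum_congr rfl fun r _ => by rw [hsym x r p j]; ring
    have s3 : ∑ r, Γ x r q p * Γ x i r j = ∑ r, Γ x i j r * Γ x r p q :=
      Finset.sum_congr rfl fun r _ => by rw [hsym x r q p, hsym x i r j]; ring
    have s4 : ∑ r, Γ x r q j * Γ x i r p = ∑ r, Γ x i r p * Γ x r j q :=
      Finset.sum_congr rfl fun r _ => by rw [hsym x r q j]; ring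
    have s5 : ∑ r, Γ x i j r * Γ x r q p = ∑ r, Γ x i j r * Γ x r p q :=
      Finset.sum_congr rfl fun r _ => by rw [hsym x r q p]
    rw [s1, s2, hD q p j] at f1
    rw [s3, s4, hD p q j, hD j q p] at f2
    rw [hD j q p, s5]
    linarith [f1, f2]
  have hT := double_sum_antisym
    (fun p q => -(pd (fun y => Γ y i p q) x j) + pd (fun y => Γ y i j p) x q
      - (∑ r, Γ x i j r * Γ x r p q) + ∑ r, Γ x i r p * Γ x r j q) v key
  simp only [add_mul, sub_mul, neg_mul, Finset.sum_add_distrib, Finset.sum_sub_distrib,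
    Finset.sum_neg_distrib] at hT
  linarith [hT]

lemma eps_zero
    (Γ : (Fin n → ℝ) → Fin n → Fin n → Fin n → ℝ) (H : ℝ → ℝ)
    (hsym : ∀ x i j k, Γ x i j k = Γ x i k j)
    (t : ℝ) (x v : Fin n → ℝ) (i : Fin n) :
    eps (fun s y w i' => (∑ p, ∑ q, Γ y i' p q * w p * w q) - H s * w i') H t x v i = 0 := by
  have hpdF : ∀ (x v : Fin n → ℝ) (s : ℝ) (a b : Fin n),
      pd (fun w => (∑ p, ∑ q, Γ x a p q * w p * w q) - H s * w a) v b
        = 2 * (∑ q, Γ x a b q * v q) - H s * (if a = b then 1 else 0) :=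
    fun x v s a b => pd_quad (fun p q => Γ x a p q) (fun p q => hsym x a p q) (H s) v a b
  simp only [eps, hpdF]
  have A : ∑ r, (2 * ∑ q, Γ x i r q * v q - H t * (if i = r then (1:ℝ) else 0)) * v r
      = 2 * (∑ p, ∑ q, Γ x i p q * v p * v q) - H t * v i := by
    have step : ∀ r : Fin n,
        (2 * ∑ q, Γ x i r q * v q - H t * (if i = r then (1:ℝ) else 0)) * v r
        = (∑ q, 2 * (Γ x i r q * v q * v r)) - H t * (if i = r then v r else 0) := by
      intro r
      rw [sub_mul, Finset.mul_sum, Finset.sum_mul]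
      congr 1
      · apply Finset.sum_congr rfl; intro q _; ring
      · split_ifs <;> ring
    simp only [step, Finset.sum_sub_distrib]
    have e1 : ∑ r, ∑ q, 2 * (Γ x i r q * v q * v r) = 2 * ∑ p, ∑ q, Γ x i p q * v p * v q := by
      rw [Finset.mul_sum]
      apply Finset.sum_congr rfl; intro p _
      rw [Finset.mul_sum]
      apply Finset.sum_congr rfl; intro q _; ring
    have e2 : ∑ r, H t * (if i = r then v r else 0) = H t * v i := by
      rw [← Finset.mul_sum, Finset.sum_ite_eq Finset.univ i (fun r => v r)]
      simp
    rw [e1, e2]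
  rw [A]; ring

lemma Dtens_zero
    (Γ : (Fin n → ℝ) → Fin n → Fin n → Fin n → ℝ) (H : ℝ → ℝ)
    (hsym : ∀ x i j k, Γ x i j k = Γ x i k j)
    (t : ℝ) (x v : Fin n → ℝ) (i j k m : Fin n) :
    Dtens (fun s y w i' => (∑ p, ∑ q, Γ y i' p q * w p * w q) - H s * w i')
      t x v i j k m = 0 := by
  have hpdF : ∀ (x v : Fin n → ℝ) (s : ℝ) (a b : Fin n),
      pd (fun w => (∑ p, ∑ q, Γ x a p q * w p * w q) - H s * w a) v b
        = 2 * (∑ q, Γ x a b q * v q) - H s * (if a = b then 1 else 0) :=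
    fun x v s a b => pd_quad (fun p q => Γ x a p q) (fun p q => hsym x a p q) (H s) v a b
  simp only [Dtens, hpdF]
  have h4 : ∀ w : Fin n → ℝ,
      pd (fun w' => 2 * (∑ q, Γ x i j q * w' q) - H t * (if i = j then (1:ℝ) else 0)) w k
        = 2 * Γ x i j k :=
    fun w => pd_lin (fun q => Γ x i j q) 2 _ w k
  simp only [h4]
  exact pd_const _ v m

lemma Rcurv_zero
    (Γ : (Fin n → ℝ) → Fin n → Fin n → Fin n → ℝ) (H : ℝ → ℝ)
    (hΓ : ∀ i j k, ContDiff ℝ (⊤ : ℕ∞) (fun x => Γ x i j k))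
    (hsym : ∀ x i j k, Γ x i j k = Γ x i k j)
    (hH : ContDiff ℝ (⊤ : ℕ∞) H)
    (hflat : ∀ x i p q j, curv Γ x i p q j = 0)
    (t : ℝ) (x v : Fin n → ℝ) (i j k : Fin n) :
    Rcurv (fun s y w i' => (∑ p, ∑ q, Γ y i' p q * w p * w q) - H s * w i')
      H t x v i j k = 0 := by
  rw [Rcurv]
  rw [show (fun w => Pdev (fun s y w i' => (∑ p, ∑ q, Γ y i' p q * w p * w q) - H s * w i')
      H t x w i j) = fun _ => (0:ℝ) from
    funext fun w => Pdev_zero Γ H hΓ hsym hH hflat t x w i j]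
  rw [show (fun w => Pdev (fun s y w i' => (∑ p, ∑ q, Γ y i' p q * w p * w q) - H s * w i')
      H t x w i k) = fun _ => (0:ℝ) from
    funext fun w => Pdev_zero Γ H hΓ hsym hH hflat t x w i k]
  rw [pd_const, pd_const]
  ring

lemma Bcurv_zero
    (Γ : (Fin n → ℝ) → Fin n → Fin n → Fin n → ℝ) (H : ℝ → ℝ)
    (hΓ : ∀ i j k, ContDiff ℝ (⊤ : ℕ∞) (fun x => Γ x i j k))
    (hsym : ∀ x i j k, Γ x i j k = Γ x i k j)
    (hH : ContDiff ℝ (⊤ : ℕ∞) H)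
    (hflat : ∀ x i p q j, curv Γ x i p q j = 0)
    (t : ℝ) (x v : Fin n → ℝ) (i j k m : Fin n) :
    Bcurv (fun s y w i' => (∑ p, ∑ q, Γ y i' p q * w p * w q) - H s * w i')
      H t x v i j k m = 0 := by
  rw [Bcurv]
  rw [show (fun w => Rcurv (fun s y w i' => (∑ p, ∑ q, Γ y i' p q * w p * w q) - H s * w i')
      H t x w i j k) = fun _ => (0:ℝ) from
    funext fun w => Rcurv_zero Γ H hΓ hsym hH hflat t x w i j k]
  exact pd_const _ v m

end Main

/-- If `F^{(i)} = Γ^i_{pq}(x) x₁^p x₁^q − H¹₁₁(t) x₁^i` with `Γ` a flat symmetric linear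
connection, then all five h-KCC-invariants vanish. -/
theorem invariants_vanish_of_flat_connection {n : ℕ}
    (Γ : (Fin n → ℝ) → Fin n → Fin n → Fin n → ℝ) (H : ℝ → ℝ)
    (hΓ : ∀ i j k, ContDiff ℝ (⊤ : ℕ∞) (fun x => Γ x i j k))
    (hsym : ∀ x i j k, Γ x i j k = Γ x i k j)
    (hH : ContDiff ℝ (⊤ : ℕ∞) H)
    (hflat : ∀ x i p q j, curv Γ x i p q j = 0) :
    ∀ (t : ℝ) (x v : Fin n → ℝ) (i j k m : Fin n),
      eps (fun s y w i' => (∑ p, ∑ q, Γ y i' p q * w p * w q) - H s * w i')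
        H t x v i = 0 ∧
      Pdev (fun s y w i' => (∑ p, ∑ q, Γ y i' p q * w p * w q) - H s * w i')
        H t x v i j = 0 ∧
      Rcurv (fun s y w i' => (∑ p, ∑ q, Γ y i' p q * w p * w q) - H s * w i')
        H t x v i j k = 0 ∧
      Bcurv (fun s y w i' => (∑ p, ∑ q, Γ y i' p q * w p * w q) - H s * w i')
        H t x v i j k m = 0 ∧
      Dtens (fun s y w i' => (∑ p, ∑ q, Γ y i' p q * w p * w q) - H s * w i')
        t x v i j k m = 0 := by
  intro t x v i j k m
  exact ⟨eps_zero Γ H hsym t x v i,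
    Pdev_zero Γ H hΓ hsym hH hflat t x v i j,
    Rcurv_zero Γ H hΓ hsym hH hflat t x v i j k,
    Bcurv_zero Γ H hΓ hsym hH hflat t x v i j k m,
    Dtens_zero Γ H hsym t x v i j k m⟩
end
end
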